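/- arXiv:1507.06817 — 2 statements merged into one kernel-verified Lean document; each statement's English description precedes it below -/
import Mathlib

section
/- Let X be a compact metric space such that X^{slc} ≠ ∅ (i.e., X is semi-locally connected at some point). Then every homeomorphism f : X → X satisfying property (CW) has at least one almost automorphic point, i.e., A(f) ≠ ∅. -/
open Metric Filter Topology Set

variable {X : Type*}

/-- The `n`-th iterate (for `n : ℤ`) of a homeomorphism `f : X ≃ₜ X`. -/
def hIter [TopologicalSpace X] (f : X ≃ₜ X) (n : ℤ) : X → X :=
  ⇑(f.toEquiv ^ n)

/-- `f` is equicontinuous: for every `ε > 0` there is `δ > 0` such that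
`d(fⁿ x, fⁿ y) ≤ ε` for all `n : ℤ` whenever `d(x, y) ≤ δ`. -/
def EquicontHomeo [MetricSpace X] (f : X ≃ₜ X) : Prop :=
  ∀ ε > (0 : ℝ), ∃ δ > (0 : ℝ), ∀ x y : X, dist x y ≤ δ →
    ∀ n : ℤ, dist (hIter f n x) (hIter f n y) ≤ ε

/-- Property (CW): `inf_{n ∈ ℤ} dist(fⁿ x, fⁿ C) > 0` for every `x ∈ X` and every
subcontinuum `C` (nonempty compact connected subset) with `x ∉ C`. -/
def PropCW [MetricSpace X] (f : X ≃ₜ X) : Prop :=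
  ∀ (x : X) (C : Set X), C.Nonempty → IsCompact C → IsConnected C → x ∉ C →
    0 < ⨅ n : ℤ, infDist (hIter f n x) (hIter f n '' C)

/-- `X` is semi-locally connected at `p`: every open neighborhood `U` of `p` contains an
open neighborhood `V` of `p` such that `X \ U` is covered by finitely many connected
components of `X \ V`. -/
def SemiLocallyConnectedAt [TopologicalSpace X] (p : X) : Prop :=
  ∀ U : Set X, IsOpen U → p ∈ U → ∃ V : Set X, IsOpen V ∧ p ∈ V ∧ V ⊆ U ∧
    ∃ 𝒞 : Finset (Set X), (∀ C ∈ 𝒞, ∃ x ∈ Vᶜ, C = connectedComponentIn Vᶜ x) ∧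
      Uᶜ ⊆ ⋃ C ∈ 𝒞, C

/-- `x` is an almost automorphic point of `f`. -/
def AlmostAutomorphicPt [MetricSpace X] (f : X ≃ₜ X) (x : X) : Prop :=
  ∀ (n : ℕ → ℤ) (y : X), Tendsto (fun i => hIter f (n i) x) atTop (𝓝 y) →
    Tendsto (fun i => hIter f (-(n i)) y) atTop (𝓝 x)

/-- A set `F ⊆ ℤ` is syndetic if it meets every interval `[n, n + l]` for some fixed `l > 0`. -/
def SyndeticZ (F : Set ℤ) : Prop :=
  ∃ l > (0 : ℤ), ∀ n : ℤ, ∃ m ∈ F, n ≤ m ∧ m ≤ n + l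

/-- `x` is an almost periodic point of `f`. -/
def AlmostPeriodicPt [TopologicalSpace X] (f : X ≃ₜ X) (x : X) : Prop :=
  ∀ U ∈ 𝓝 x, ∃ F : Set ℤ, SyndeticZ F ∧ ∀ n ∈ F, hIter f n x ∈ U

/-- `x` is a locally almost periodic point of `f`. -/
def LocallyAlmostPeriodicPt [TopologicalSpace X] (f : X ≃ₜ X) (x : X) : Prop :=
  ∀ U ∈ 𝓝 x, ∃ V ∈ 𝓝 x, V ⊆ U ∧ ∃ F : Set ℤ, SyndeticZ F ∧ ∀ n ∈ F, hIter f n '' V ⊆ U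

/-- `f` is distal. -/
def DistalHomeo [MetricSpace X] (f : X ≃ₜ X) : Prop :=
  ∀ x y : X, x ≠ y → 0 < ⨅ n : ℤ, dist (hIter f n x) (hIter f n y)

/-- `f` is transitive: some orbit `{fⁿ x : n ∈ ℤ}` is dense. -/
def TransitiveHomeo [TopologicalSpace X] (f : X ≃ₜ X) : Prop :=
  ∃ x : X, Dense (Set.range fun n : ℤ => hIter f n x)

/-! Every point `p` at which `X` is semi-locally connected is almost automorphic. Given a ball
`U` around `p`, semi-local connectedness covers `X ∖ U` by finitely many components `C` of the
complement of a smaller neighbourhood of `p`; these are subcontinua missing `p`, so by (CW) the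
orbit of `p` stays a uniform distance `c > 0` away from the orbits of all of them. If
`fⁿⁱ p → y`, then eventually `fⁿⁱ p` is `c`-close to `y = fⁿⁱ (f⁻ⁿⁱ y)`, so `f⁻ⁿⁱ y` lies in no
`C`, i.e. it lies in `U`. -/

theorem hIter_hIter_neg [TopologicalSpace X] (f : X ≃ₜ X) (n : ℤ) (y : X) :
    hIter f n (hIter f (-n) y) = y := by
  simp [hIter, zpow_neg]

theorem IsClosed.isCompact_connectedComponentIn [TopologicalSpace X] [CompactSpace X]
    {F : Set X} (hF : IsClosed F) {x : X} (hx : x ∈ F) :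
    IsCompact (connectedComponentIn F x) := by
  have : CompactSpace F := isCompact_iff_compactSpace.mp hF.isCompact
  rw [connectedComponentIn_eq_image hx]
  exact isClosed_connectedComponent.isCompact.image continuous_subtype_val

section CW

variable [MetricSpace X] {f : X ≃ₜ X}

theorem PropCW.eventually_le_infDist (hcw : PropCW f) {x : X} {C : Set X} (hC : IsCompact C)
    (hconn : IsConnected C) (hxC : x ∉ C) :
    ∀ᶠ c in 𝓝[>] (0 : ℝ), ∀ n : ℤ, c ≤ infDist (hIter f n x) (hIter f n '' C) := by
  have hpos := hcw x C hconn.nonempty hC hconn hxC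
  have hbdd : BddBelow (range fun n : ℤ => infDist (hIter f n x) (hIter f n '' C)) :=
    ⟨0, by rintro _ ⟨n, rfl⟩; exact infDist_nonneg⟩
  filter_upwards [Ioo_mem_nhdsGT hpos] with c hc n
  exact hc.2.le.trans (ciInf_le hbdd n)

theorem PropCW.exists_pos_forall_le_infDist (hcw : PropCW f) {x : X} (𝒞 : Finset (Set X))
    (h𝒞 : ∀ C ∈ 𝒞, IsCompact C ∧ IsConnected C ∧ x ∉ C) :
    ∃ c > (0 : ℝ), ∀ C ∈ 𝒞, ∀ n : ℤ, c ≤ infDist (hIter f n x) (hIter f n '' C) := by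
  have hev : ∀ᶠ c in 𝓝[>] (0 : ℝ),
      0 < c ∧ ∀ C ∈ 𝒞, ∀ n : ℤ, c ≤ infDist (hIter f n x) (hIter f n '' C) :=
    (eventually_mem_nhdsWithin (s := Ioi 0)).and <| (eventually_all_finset 𝒞).2 fun C hC =>
      hcw.eventually_le_infDist (h𝒞 C hC).1 (h𝒞 C hC).2.1 (h𝒞 C hC).2.2
  exact hev.exists

end CW

theorem SemiLocallyConnectedAt.almostAutomorphicPt [MetricSpace X] [CompactSpace X]
    {f : X ≃ₜ X} (hcw : PropCW f) {p : X} (hp : SemiLocallyConnectedAt p) :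
    AlmostAutomorphicPt f p := by
  intro n y hny
  rw [Metric.tendsto_nhds] at hny ⊢
  intro ε hε
  obtain ⟨V, hVopen, hpV, -, 𝒞, h𝒞, hcover⟩ := hp (ball p ε) isOpen_ball (mem_ball_self hε)
  have hsub : ∀ C ∈ 𝒞, IsCompact C ∧ IsConnected C ∧ p ∉ C := by
    intro C hC
    obtain ⟨x, hx, rfl⟩ := h𝒞 C hC
    exact ⟨hVopen.isClosed_compl.isCompact_connectedComponentIn hx,
      isConnected_connectedComponentIn_iff.2 hx,
      fun hpC => connectedComponentIn_subset _ _ hpC hpV⟩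
  obtain ⟨c, hc, hle⟩ := hcw.exists_pos_forall_le_infDist 𝒞 hsub
  filter_upwards [hny c hc] with i hi
  by_contra hfar
  obtain ⟨C, hC, hyC⟩ := mem_iUnion₂.mp (hcover fun hmem => hfar (mem_ball.mp hmem))
  have hclose : infDist (hIter f (n i) p) (hIter f (n i) '' C) < c :=
    calc infDist (hIter f (n i) p) (hIter f (n i) '' C)
        ≤ dist (hIter f (n i) p) (hIter f (n i) (hIter f (-(n i)) y)) :=
          infDist_le_dist_of_mem (mem_image_of_mem _ hyC)
      _ = dist (hIter f (n i) p) y := by rw [hIter_hIter_neg]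
      _ < c := hi
  exact (hle C hC (n i)).not_gt hclose

/-- If `X^{slc} ≠ ∅`, then every homeomorphism satisfying (CW) has an
almost automorphic point. -/
theorem almostAutomorphic_nonempty_of_slc_nonempty
    [MetricSpace X] [CompactSpace X] (f : X ≃ₜ X)
    (hslc : ∃ p : X, SemiLocallyConnectedAt p) (hcw : PropCW f) :
    ∃ x : X, AlmostAutomorphicPt f x :=
  let ⟨p, hp⟩ := hslc
  ⟨p, hp.almostAutomorphicPt hcw⟩
end

section
/- Let X be a compact metric space with X^{slc} ≠ ∅ (i.e., X is semi-locally connected at some point). Then a transitive homeomorphism f : X → X satisfies property (CW) if and only if it is equicontinuous. -/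
open Metric Filter Topology Set

variable {X : Type*}

/-!
(CW) applied to singletons makes `f` distal, and a transitive distal homeomorphism is minimal
(an idempotent of the enveloping semigroup is injective, hence the identity). At a point `p`
where `X` is semi-locally connected, the far side of a small ball around `p` is covered by
finitely many subcontinua lying outside a neighbourhood `V` of `p`; (CW) separates every point
of `V` from them along the whole orbit, and Baire's theorem makes this separation uniform on a
nonempty open set `W`. By minimality every orbit enters `W` at one of finitely many times
`k ∈ F`. If `a ≠ b` have distal constant `c`, the pairs near `(a, b)` are more than `c / 2`
apart at all times in `F`, so they are never of the form `(fⁿ y, fⁿ z)` with `y, z` close;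
compactness of the set of pairs at distance `≥ ε` then yields equicontinuity.
-/

open scoped Uniformity

section Iterates

variable [TopologicalSpace X] (f : X ≃ₜ X)

theorem hIter_eq_coe_zpow (n : ℤ) : hIter f n = ⇑(f ^ n) := by
  let toPerm : (X ≃ₜ X) →* Equiv.Perm X :=
    { toFun := Homeomorph.toEquiv, map_one' := rfl, map_mul' := fun _ _ => rfl }
  exact congrArg DFunLike.coe (map_zpow toPerm f n).symm

theorem continuous_hIter (n : ℤ) : Continuous (hIter f n) := by
  rw [hIter_eq_coe_zpow]
  exact (f ^ n).continuous

theorem hIter_zero : hIter f 0 = id := by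
  rw [hIter_eq_coe_zpow, zpow_zero]
  rfl

theorem hIter_add (m n : ℤ) (x : X) : hIter f (m + n) x = hIter f m (hIter f n x) := by
  simp only [hIter_eq_coe_zpow, zpow_add, Homeomorph.mul_apply]

theorem hIter_neg_hIter (n : ℤ) (x : X) : hIter f (-n) (hIter f n x) = x := by
  rw [← hIter_add, neg_add_cancel, hIter_zero, id]

end Iterates

theorem EquicontHomeo.propCW [MetricSpace X] {f : X ≃ₜ X} (hf : EquicontHomeo f) :
    PropCW f := by
  intro x C hne hC _ hx
  have hpos : 0 < infDist x C := (hC.isClosed.notMem_iff_infDist_pos hne).mp hx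
  obtain ⟨δ, hδ, hfδ⟩ := hf (infDist x C / 2) (half_pos hpos)
  have hsep : ∀ n : ℤ, δ ≤ infDist (hIter f n x) (hIter f n '' C) := by
    intro n
    refine (le_infDist (hne.image _)).2 ?_
    rintro _ ⟨c, hc, rfl⟩
    by_contra! hlt
    have hclose := hfδ _ _ hlt.le (-n)
    rw [hIter_neg_hIter, hIter_neg_hIter] at hclose
    linarith [infDist_le_dist_of_mem hc (x := x)]
  exact hδ.trans_le (le_ciInf hsep)

theorem PropCW.distalHomeo [MetricSpace X] {f : X ≃ₜ X} (hf : PropCW f) : DistalHomeo f := by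
  intro x y hxy
  simpa [image_singleton, infDist_singleton] using
    hf x {y} (singleton_nonempty y) isCompact_singleton isConnected_singleton hxy

theorem IsClosed.connectedComponentIn [TopologicalSpace X] {F : Set X} (hF : IsClosed F)
    (x : X) : IsClosed (connectedComponentIn F x) := by
  by_cases hx : x ∈ F
  · refine isClosed_of_closure_subset ?_
    exact isPreconnected_connectedComponentIn.closure.subset_connectedComponentIn
      (subset_closure (mem_connectedComponentIn hx))
      (closure_minimal (connectedComponentIn_subset F x) hF)
  · rw [connectedComponentIn_eq_empty hx]
    exact isClosed_empty

theorem IsOpen.exists_isOpen_subset_inter_of_subset_iUnion [TopologicalSpace X] [BaireSpace X]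
    {ι : Type*} [Countable ι] {V : Set X} (hV : IsOpen V) (hne : V.Nonempty) {A : ι → Set X}
    (hA : ∀ i, IsClosed (A i)) (hcov : V ⊆ ⋃ i, A i) :
    ∃ i, ∃ W : Set X, IsOpen W ∧ W.Nonempty ∧ W ⊆ V ∩ A i := by
  obtain ⟨i₀, -⟩ := mem_iUnion.1 (hcov hne.some_mem)
  have hdense : Dense (⋃ i, interior (A i ∪ Vᶜ)) := by
    refine dense_iUnion_interior_of_closed (fun i => (hA i).union hV.isClosed_compl) ?_
    refine eq_univ_of_forall fun x => ?_
    by_cases hx : x ∈ V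
    · obtain ⟨i, hi⟩ := mem_iUnion.1 (hcov hx)
      exact mem_iUnion.2 ⟨i, Or.inl hi⟩
    · exact mem_iUnion.2 ⟨i₀, Or.inr hx⟩
  obtain ⟨x, hxV, hx⟩ := hdense.inter_open_nonempty V hV hne
  obtain ⟨i, hi⟩ := mem_iUnion.1 hx
  refine ⟨i, V ∩ interior (A i ∪ Vᶜ), hV.inter isOpen_interior, ⟨x, hxV, hi⟩, ?_⟩
  rintro y ⟨hyV, hy⟩
  exact ⟨hyV, (interior_subset hy).resolve_right (not_not.2 hyV)⟩

section EnvelopingSemigroup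

variable [TopologicalSpace X] (f : X ≃ₜ X)

def envelopingSemigroup : Set (X → X) :=
  closure (range (hIter f))

theorem hIter_mem_envelopingSemigroup (n : ℤ) : hIter f n ∈ envelopingSemigroup f :=
  subset_closure ⟨n, rfl⟩

theorem id_mem_envelopingSemigroup : id ∈ envelopingSemigroup f :=
  hIter_zero f ▸ hIter_mem_envelopingSemigroup f 0

variable {f}

theorem comp_mem_envelopingSemigroup {g h : X → X} (hg : g ∈ envelopingSemigroup f)
    (hh : h ∈ envelopingSemigroup f) : g ∘ h ∈ envelopingSemigroup f := by
  have hiter : ∀ n, hIter f n ∘ h ∈ envelopingSemigroup f := fun n =>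
    map_mem_closure (continuous_pi fun x => (continuous_hIter f n).comp (continuous_apply x)) hh
      (by rintro _ ⟨m, rfl⟩; exact ⟨n + m, funext fun x => hIter_add f n m x⟩)
  simpa only [envelopingSemigroup, closure_closure, Function.comp_def] using
    map_mem_closure (t := envelopingSemigroup f) (continuous_pi fun x => continuous_apply (h x)) hg
      (by rintro _ ⟨n, rfl⟩; exact hiter n)

variable (f)

theorem isCompact_envelopingSemigroup [CompactSpace X] : IsCompact (envelopingSemigroup f) :=
  isClosed_closure.isCompact

theorem image_eval_envelopingSemigroup [CompactSpace X] [T2Space X] (x : X) :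
    (fun g : X → X => g x) '' envelopingSemigroup f = closure (range fun n : ℤ => hIter f n x) := by
  refine Subset.antisymm ?_ (closure_minimal ?_ ?_)
  · rintro _ ⟨g, hg, rfl⟩
    exact map_mem_closure (f := fun g : X → X => g x) (continuous_apply x) hg (by rintro _ ⟨n, rfl⟩; exact ⟨n, rfl⟩)
  · rintro _ ⟨n, rfl⟩
    exact ⟨_, hIter_mem_envelopingSemigroup f n, rfl⟩
  · exact ((isCompact_envelopingSemigroup f).image (continuous_apply x)).isClosed

end EnvelopingSemigroup

theorem exists_comp_self_eq_of_isCompact [TopologicalSpace X] [T2Space X] {S : Set (X → X)}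
    (hne : S.Nonempty) (hS : IsCompact S) (hcomp : ∀ g ∈ S, ∀ h ∈ S, g ∘ h ∈ S) :
    ∃ u ∈ S, u ∘ u = u := by
  let _ : TopologicalSpace (Function.End X) := Pi.topologicalSpace
  have _ : T2Space (Function.End X) := inferInstanceAs (T2Space (X → X))
  exact exists_idempotent_in_compact_subsemigroup (M := Function.End X)
    (fun r => continuous_pi fun x => continuous_apply (r x)) S hne hS hcomp

theorem DistalHomeo.injective_of_mem_envelopingSemigroup [MetricSpace X] {f : X ≃ₜ X}
    (hf : DistalHomeo f) {g : X → X} (hg : g ∈ envelopingSemigroup f) : Function.Injective g := by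
  intro x z hxz
  by_contra hne
  set c := ⨅ n : ℤ, dist (hIter f n x) (hIter f n z)
  have hc : 0 < c := hf x z hne
  obtain ⟨_, ⟨hx, hz⟩, n, rfl⟩ := mem_closure_iff.1 hg
    ((fun k : X → X => k x) ⁻¹' ball (g x) (c / 2) ∩ (fun k : X → X => k z) ⁻¹' ball (g z) (c / 2))
    ((isOpen_ball.preimage (continuous_apply x)).inter (isOpen_ball.preimage (continuous_apply z)))
    ⟨mem_ball_self (half_pos hc), mem_ball_self (half_pos hc)⟩
  have hx : dist (hIter f n x) (g x) < c / 2 := hx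
  have hz : dist (hIter f n z) (g x) < c / 2 := hxz ▸ hz
  have hcn : c ≤ dist (hIter f n x) (hIter f n z) :=
    ciInf_le ⟨0, by rintro _ ⟨m, rfl⟩; exact dist_nonneg⟩ n
  linarith [dist_triangle_right (hIter f n x) (hIter f n z) (g x)]

def MinimalHomeo [TopologicalSpace X] (f : X ≃ₜ X) : Prop :=
  ∀ x : X, Dense (range fun n : ℤ => hIter f n x)

theorem TransitiveHomeo.minimalHomeo_of_distalHomeo [MetricSpace X] [CompactSpace X]
    {f : X ≃ₜ X} (ht : TransitiveHomeo f) (hd : DistalHomeo f) : MinimalHomeo f := by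
  set E := envelopingSemigroup f
  have hdense : ∀ x, Dense (range fun n : ℤ => hIter f n x) ↔ ∀ z, ∃ g ∈ E, g x = z := by
    intro x
    rw [dense_iff_closure_eq, ← image_eval_envelopingSemigroup, eq_univ_iff_forall]
    rfl
  obtain ⟨x₀, hx₀⟩ := ht
  rw [hdense] at hx₀
  intro y
  rw [hdense]
  obtain ⟨h, hh, rfl⟩ := hx₀ y
  -- an idempotent `u` of `J` fixes `x₀` by injectivity, so `x₀ = k (h x₀)` for some `k ∈ E`
  set J := E ∩ (fun g : X → X => g x₀) ⁻¹' ((fun g : X → X => g (h x₀)) '' E)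
  have hJ : IsCompact J := by
    refine (isCompact_envelopingSemigroup f).inter_right (IsClosed.preimage (continuous_apply x₀) ?_)
    rw [image_eval_envelopingSemigroup]
    exact isClosed_closure
  have hJcomp : ∀ g ∈ J, ∀ g' ∈ J, g ∘ g' ∈ J := by
    rintro g ⟨hg, -⟩ g' ⟨hg', k, hk, hkg'⟩
    exact ⟨comp_mem_envelopingSemigroup hg hg', g ∘ k, comp_mem_envelopingSemigroup hg hk,
      by simp only [Function.comp_apply, hkg']⟩
  obtain ⟨u, ⟨hu, k, hk, hku⟩, huu⟩ := exists_comp_self_eq_of_isCompact (S := J)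
    ⟨h, hh, id, id_mem_envelopingSemigroup f, rfl⟩ hJ hJcomp
  have hux₀ : u x₀ = x₀ := hd.injective_of_mem_envelopingSemigroup hu (congrFun huu x₀)
  intro z
  obtain ⟨g, hg, rfl⟩ := hx₀ z
  exact ⟨g ∘ k, comp_mem_envelopingSemigroup hg hk, by simp only [Function.comp_apply, hku, hux₀]⟩

theorem MinimalHomeo.exists_finset_hIter_mem [TopologicalSpace X] [CompactSpace X]
    {f : X ≃ₜ X} (hf : MinimalHomeo f) {W : Set X} (hW : IsOpen W) (hne : W.Nonempty) :
    ∃ F : Finset ℤ, ∀ y, ∃ k ∈ F, hIter f k y ∈ W := by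
  obtain ⟨F, hF⟩ := isCompact_univ.elim_finite_subcover (fun k : ℤ => hIter f k ⁻¹' W)
    (fun k => hW.preimage (continuous_hIter f k)) fun y _ => by
      obtain ⟨_, ⟨k, rfl⟩, hk⟩ := (hf y).exists_mem_open hW hne
      exact mem_iUnion.2 ⟨k, hk⟩
  exact ⟨F, fun y => by simpa using hF (mem_univ y)⟩

theorem uniformEquicontinuous_of_forall_ne {ι Y : Type*} [UniformSpace X] [MetricSpace Y]
    [CompactSpace Y] {F : ι → X → Y}
    (h : ∀ a b : Y, a ≠ b → ∃ N ∈ 𝓝 (a, b), ∀ᶠ q in 𝓤 X, ∀ i, (F i q.1, F i q.2) ∉ N) :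
    UniformEquicontinuous F := by
  intro U hU
  obtain ⟨ε, hε, hεU⟩ := mem_uniformity_dist.1 hU
  have hfar : ∀ᶠ q in 𝓤 X, ∀ i, (F i q.1, F i q.2) ∉ {y : Y × Y | ε ≤ dist y.1 y.2} := by
    refine IsCompact.induction_on (p := fun S => ∀ᶠ q in 𝓤 X, ∀ i, (F i q.1, F i q.2) ∉ S)
      (isClosed_le continuous_const continuous_dist).isCompact (by simp) ?_ ?_ ?_
    · intro S T hST hT
      exact hT.mono fun q hq i hi => hq i (hST hi)
    · intro S T hS hT
      filter_upwards [hS, hT] with q hqS hqT i hi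
      exact hi.elim (hqS i) (hqT i)
    · rintro ⟨a, b⟩ hab
      obtain ⟨N, hN, hq⟩ := h a b (dist_pos.1 (hε.trans_le hab))
      exact ⟨N, mem_nhdsWithin_of_mem_nhds hN, hq⟩
  filter_upwards [hfar] with q hq i using hεU (not_le.1 (hq i))

theorem UniformEquicontinuous.equicontHomeo [MetricSpace X] {f : X ≃ₜ X}
    (hf : UniformEquicontinuous (hIter f)) : EquicontHomeo f := by
  intro ε hε
  obtain ⟨δ, hδ, hfδ⟩ := Metric.uniformEquicontinuous_iff.1 hf ε hε
  exact ⟨δ / 2, half_pos hδ, fun x y hxy n => (hfδ x y (hxy.trans_lt (half_lt_self hδ)) n).le⟩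

theorem PropCW.exists_isOpen_forall_le_dist_hIter [MetricSpace X] [CompactSpace X]
    {f : X ≃ₜ X} (hf : PropCW f) {p : X} (hp : SemiLocallyConnectedAt p) {r : ℝ} (hr : 0 < r) :
    ∃ W : Set X, IsOpen W ∧ W.Nonempty ∧ ∃ β > 0, ∀ x ∈ W, ∀ w, r ≤ dist x w →
      ∀ m : ℤ, β ≤ dist (hIter f m x) (hIter f m w) := by
  obtain ⟨V, hV, hpV, hVU, 𝒞, h𝒞, hcover⟩ :=
    hp (ball p (r / 2)) isOpen_ball (mem_ball_self (half_pos hr))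
  set A : ℕ → Set X := fun k =>
    {x | ∀ C ∈ 𝒞, ∀ m : ℤ, 1 / (k + 1 : ℝ) ≤ infDist (hIter f m x) (hIter f m '' C)}
  have hA : ∀ k, IsClosed (A k) := fun k => by
    simp only [A, ofPred_forall]
    exact isClosed_biInter fun C _ => isClosed_iInter fun m =>
      isClosed_le continuous_const ((continuous_infDist_pt _).comp (continuous_hIter f m))
  have hcov : V ⊆ ⋃ k, A k := by
    intro x hx
    have hsep : ∀ C ∈ 𝒞, ∀ᶠ k : ℕ in atTop,
        ∀ m : ℤ, 1 / (k + 1 : ℝ) ≤ infDist (hIter f m x) (hIter f m '' C) := by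
      intro C hC
      obtain ⟨c, hc, rfl⟩ := h𝒞 C hC
      have hpos := hf x _ ⟨c, mem_connectedComponentIn hc⟩
        (hV.isClosed_compl.connectedComponentIn c).isCompact
        (isConnected_connectedComponentIn_iff.2 hc)
        (fun h => connectedComponentIn_subset _ _ h hx)
      filter_upwards [tendsto_one_div_add_atTop_nhds_zero_nat.eventually (eventually_le_nhds hpos)]
        with k hk m
      exact hk.trans (ciInf_le ⟨0, by rintro _ ⟨_, rfl⟩; exact infDist_nonneg⟩ m)
    obtain ⟨k, hk⟩ := ((eventually_all_finset 𝒞).2 hsep).exists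
    exact mem_iUnion.2 ⟨k, hk⟩
  obtain ⟨k, W, hW, hWne, hWA⟩ := hV.exists_isOpen_subset_inter_of_subset_iUnion ⟨p, hpV⟩ hA hcov
  refine ⟨W, hW, hWne, 1 / (k + 1), by positivity, fun x hx w hxw m => ?_⟩
  have hw : w ∉ ball p (r / 2) := fun hw => by
    have hxp : dist x p < r / 2 := hVU (hWA hx).1
    linarith [dist_triangle_right x w p, mem_ball.1 hw]
  obtain ⟨C, hC, hwC⟩ : ∃ C ∈ 𝒞, w ∈ C := by simpa using hcover hw
  exact ((hWA hx).2 C hC m).trans (infDist_le_dist_of_mem (mem_image_of_mem _ hwC))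

theorem PropCW.equicontHomeo [MetricSpace X] [CompactSpace X] {f : X ≃ₜ X} (hf : PropCW f)
    {p : X} (hp : SemiLocallyConnectedAt p) (hmin : MinimalHomeo f) : EquicontHomeo f := by
  refine UniformEquicontinuous.equicontHomeo (uniformEquicontinuous_of_forall_ne fun a b hab => ?_)
  set c := ⨅ n : ℤ, dist (hIter f n a) (hIter f n b)
  have hc : 0 < c := hf.distalHomeo a b hab
  obtain ⟨W, hW, hWne, β, hβ, hsep⟩ := hf.exists_isOpen_forall_le_dist_hIter hp (half_pos hc)
  obtain ⟨F, hF⟩ := hmin.exists_finset_hIter_mem hW hWne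
  refine ⟨⋂ k ∈ F, {q | c / 2 < dist (hIter f k q.1) (hIter f k q.2)}, ?_, ?_⟩
  · refine (isOpen_biInter_finset fun k _ => isOpen_lt continuous_const ?_).mem_nhds ?_
    · exact ((continuous_hIter f k).comp continuous_fst).dist
        ((continuous_hIter f k).comp continuous_snd)
    · exact mem_iInter₂.2 fun k _ => (half_lt_self hc).trans_le
        (ciInf_le ⟨0, by rintro _ ⟨m, rfl⟩; exact dist_nonneg⟩ k)
  · filter_upwards [dist_mem_uniformity hβ] with q hq n hn
    obtain ⟨k, hkF, hk⟩ := hF (hIter f n q.1)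
    have hfar := hsep _ hk (hIter f k (hIter f n q.2)) (mem_iInter₂.1 hn k hkF).le (-(k + n))
    rw [← hIter_add f k n, ← hIter_add f k n, hIter_neg_hIter, hIter_neg_hIter] at hfar
    exact not_lt.2 hfar hq

/-- If `X^{slc} ≠ ∅`, a transitive homeomorphism satisfies (CW) iff it is
equicontinuous. -/
theorem transitive_propCW_iff_equicont
    [MetricSpace X] [CompactSpace X] (f : X ≃ₜ X)
    (hslc : ∃ p : X, SemiLocallyConnectedAt p) (htrans : TransitiveHomeo f) :
    PropCW f ↔ EquicontHomeo f := by
  obtain ⟨p, hp⟩ := hslc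
  exact ⟨fun hCW => hCW.equicontHomeo hp (htrans.minimalHomeo_of_distalHomeo hCW.distalHomeo),
    EquicontHomeo.propCW⟩
end
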